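/- arXiv:2512.14590 — 2 statements merged into one kernel-verified Lean document; each statement's English description precedes it below -/
import Mathlib

section
/- Let V ⊂ ℝⁿ be a bounded, convex, open set, let 1 < s < 2 and 1 ≤ p < ∞. Define for a function u ∈ W^{s,p}(V; ℝᵐ) the remainder operator R^s u(x,y) := (u(y) − u(x) − Du(x)(y−x)) / |y−x|^s. Then the L^p-norm of R^s u with respect to the measure dμ(x,y) = dx dy / |y−x|ⁿ on V × V satisfies ‖R^s u‖_{L^p(V×V, μ)}^p ≤ (∫₀¹ t^{(s−1)p} dt) · [Du]_{W^{s−1,p}(V)}^p, where [Du]_{W^{s−1,p}} denotes the Gagliardo seminorm of Du of order s−1. -/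
/-!
By the fundamental theorem of calculus along the segment `[x, y] ⊆ V`,
`u y - u x - Du x (y - x) = ∫₀¹ (Du (x + t (y - x)) - Du x) (y - x) dt`, and Jensen's inequality on
the probability space `(0, 1]` bounds the `p`-th power of its norm by
`|y - x|ᵖ ∫₀¹ ‖Du (x + t (y - x)) - Du x‖ᵖ dt`. After exchanging the `y`- and `t`-integrals, the
substitution `z = x + t (y - x)` maps `V` into itself (convexity), has Jacobian `tⁿ` and satisfies
`|z - x| = t |y - x|`, so for each `t` the `y`-integral is at most `t^((s-1)p)` times the inner
Gagliardo integral of `Du` at `x`.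
-/

open MeasureTheory
open scoped ENNReal

theorem rpow_lintegral_le_lintegral_rpow {α : Type*} [MeasurableSpace α] (μ : Measure α)
    [IsProbabilityMeasure μ] {g : α → ℝ≥0∞} (hg : AEMeasurable g μ) {p : ℝ} (hp : 1 ≤ p) :
    (∫⁻ a, g a ∂μ) ^ p ≤ ∫⁻ a, g a ^ p ∂μ := by
  have h := eLpNorm'_le_eLpNorm'_of_exponent_le zero_lt_one hp μ hg.aestronglyMeasurable
  simp only [eLpNorm', enorm_eq_self, ENNReal.rpow_one, div_one, one_div] at h
  rwa [ENNReal.le_rpow_inv_iff (by linarith)] at h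

theorem ENNReal.mul_rpow_div_rpow_add {a r : ℝ≥0∞} (hr₀ : r ≠ 0) (hr : r ≠ ⊤) {p : ℝ}
    (hp : 0 ≤ p) (α : ℝ) : (a * r) ^ p / r ^ (p + α) = a ^ p / r ^ α := by
  rw [ENNReal.mul_rpow_of_nonneg _ _ hp, add_comm, ENNReal.rpow_add _ _ hr₀ hr,
    ENNReal.mul_div_mul_right _ _ (ENNReal.rpow_pos (pos_iff_ne_zero.2 hr₀) hr).ne'
      (ENNReal.rpow_ne_top_of_nonneg hp hr)]

theorem lintegral_Ioc_ofReal_rpow {β : ℝ} (hβ : -1 < β) :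
    ∫⁻ t in Set.Ioc (0 : ℝ) 1, ENNReal.ofReal (t ^ β)
      = ENNReal.ofReal (∫ t in (0 : ℝ)..1, t ^ β) := by
  rw [intervalIntegral.integral_of_le zero_le_one, ofReal_integral_eq_lintegral_ofReal]
  · exact (intervalIntegral.intervalIntegrable_rpow' hβ).1
  · exact (ae_restrict_mem measurableSet_Ioc).mono fun t ht => Real.rpow_nonneg ht.1.le _

section Segment

variable {E F : Type*} [NormedAddCommGroup E] [NormedSpace ℝ E] [NormedAddCommGroup F]
  [NormedSpace ℝ F] {u : E → F} {V : Set E} {x y : E}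

theorem ContDiffOn.continuousOn_fderiv_add_smul_sub (hu : ContDiffOn ℝ 1 u V) (hV : Convex ℝ V)
    (hVo : IsOpen V) (hx : x ∈ V) (hy : y ∈ V) :
    ContinuousOn (fun t : ℝ => fderiv ℝ u (x + t • (y - x))) (Set.Icc 0 1) :=
  (hu.continuousOn_fderiv_of_isOpen hVo le_rfl).comp (by fun_prop)
    fun _ ht => hV.add_smul_sub_mem hx hy ht

theorem ContDiffOn.sub_sub_fderiv_eq_integral [CompleteSpace F] (hu : ContDiffOn ℝ 1 u V)
    (hV : Convex ℝ V) (hVo : IsOpen V) (hx : x ∈ V) (hy : y ∈ V) :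
    u y - u x - fderiv ℝ u x (y - x)
      = ∫ t in (0 : ℝ)..1, (fderiv ℝ u (x + t • (y - x)) - fderiv ℝ u x) (y - x) := by
  have hderiv : ∀ t ∈ Set.uIcc (0 : ℝ) 1,
      HasDerivAt (fun τ : ℝ => u (x + τ • (y - x)) - τ • fderiv ℝ u x (y - x))
        ((fderiv ℝ u (x + t • (y - x)) - fderiv ℝ u x) (y - x)) t := by
    intro t ht
    rw [Set.uIcc_of_le zero_le_one] at ht
    have hut : HasFDerivAt u (fderiv ℝ u (x + t • (y - x))) (x + t • (y - x)) :=
      ((hu.differentiableOn one_ne_zero).differentiableAt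
        (hVo.mem_nhds (hV.add_smul_sub_mem hx hy ht))).hasFDerivAt
    have hline : HasDerivAt (fun τ : ℝ => x + τ • (y - x)) (y - x) t := by
      simpa using ((hasDerivAt_id t).smul_const (y - x)).const_add x
    exact ((hut.comp_hasDerivAt t hline).sub ((hasDerivAt_id t).smul_const _)).congr_deriv
      (by simp)
  have hcont : ContinuousOn
      (fun t : ℝ => (fderiv ℝ u (x + t • (y - x)) - fderiv ℝ u x) (y - x)) (Set.uIcc 0 1) := by
    rw [Set.uIcc_of_le zero_le_one]
    exact ((hu.continuousOn_fderiv_add_smul_sub hV hVo hx hy).sub continuousOn_const).clm_apply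
      continuousOn_const
  rw [intervalIntegral.integral_eq_sub_of_hasDerivAt hderiv hcont.intervalIntegrable]
  simp only [one_smul, zero_smul, add_sub_cancel, add_zero, sub_zero]
  abel

theorem ContDiffOn.enorm_sub_sub_fderiv_le_lintegral [CompleteSpace F] (hu : ContDiffOn ℝ 1 u V)
    (hV : Convex ℝ V) (hVo : IsOpen V) (hx : x ∈ V) (hy : y ∈ V) :
    ‖u y - u x - fderiv ℝ u x (y - x)‖ₑ
      ≤ (∫⁻ t in Set.Ioc (0 : ℝ) 1, ‖fderiv ℝ u (x + t • (y - x)) - fderiv ℝ u x‖ₑ) *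
          ‖y - x‖ₑ := by
  rw [hu.sub_sub_fderiv_eq_integral hV hVo hx hy, intervalIntegral.integral_of_le zero_le_one,
    ← lintegral_mul_const' _ _ enorm_ne_top]
  exact (enorm_integral_le_lintegral_enorm _).trans
    (lintegral_mono fun t => ContinuousLinearMap.le_opENorm _ _)

theorem ContDiffOn.enorm_sub_sub_fderiv_rpow_div_le [CompleteSpace F] (hu : ContDiffOn ℝ 1 u V)
    (hV : Convex ℝ V) (hVo : IsOpen V) (hx : x ∈ V) (hy : y ∈ V) {p : ℝ} (hp : 1 ≤ p) (α : ℝ) :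
    ‖u y - u x - fderiv ℝ u x (y - x)‖ₑ ^ p / ‖y - x‖ₑ ^ (p + α)
      ≤ ∫⁻ t in Set.Ioc (0 : ℝ) 1,
          ‖fderiv ℝ u (x + t • (y - x)) - fderiv ℝ u x‖ₑ ^ p / ‖y - x‖ₑ ^ α := by
  have hp₀ : 0 < p := by linarith
  rcases eq_or_ne y x with rfl | hyx
  · simp [ENNReal.zero_rpow_of_pos hp₀]
  have hr₀ : ‖y - x‖ₑ ≠ 0 := by simpa [sub_eq_zero] using hyx
  have hrα : (‖y - x‖ₑ ^ α)⁻¹ ≠ ⊤ :=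
    ENNReal.inv_ne_top.2 (ENNReal.rpow_pos (pos_iff_ne_zero.2 hr₀) enorm_ne_top).ne'
  have : IsProbabilityMeasure (volume.restrict (Set.Ioc (0 : ℝ) 1)) := ⟨by simp⟩
  have hmeas : AEMeasurable (fun t : ℝ => ‖fderiv ℝ u (x + t • (y - x)) - fderiv ℝ u x‖ₑ)
      (volume.restrict (Set.Ioc (0 : ℝ) 1)) :=
    (((hu.continuousOn_fderiv_add_smul_sub hV hVo hx hy).sub continuousOn_const).enorm.mono
      Set.Ioc_subset_Icc_self).aemeasurable measurableSet_Ioc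
  calc ‖u y - u x - fderiv ℝ u x (y - x)‖ₑ ^ p / ‖y - x‖ₑ ^ (p + α)
      ≤ ((∫⁻ t in Set.Ioc (0 : ℝ) 1, ‖fderiv ℝ u (x + t • (y - x)) - fderiv ℝ u x‖ₑ) *
          ‖y - x‖ₑ) ^ p / ‖y - x‖ₑ ^ (p + α) := by
        gcongr; exact hu.enorm_sub_sub_fderiv_le_lintegral hV hVo hx hy
    _ = (∫⁻ t in Set.Ioc (0 : ℝ) 1, ‖fderiv ℝ u (x + t • (y - x)) - fderiv ℝ u x‖ₑ) ^ p /
          ‖y - x‖ₑ ^ α := ENNReal.mul_rpow_div_rpow_add hr₀ enorm_ne_top hp₀.le α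
    _ ≤ (∫⁻ t in Set.Ioc (0 : ℝ) 1, ‖fderiv ℝ u (x + t • (y - x)) - fderiv ℝ u x‖ₑ ^ p) /
          ‖y - x‖ₑ ^ α := by gcongr; exact rpow_lintegral_le_lintegral_rpow _ hmeas hp
    _ = _ := by simp_rw [div_eq_mul_inv]; exact (lintegral_mul_const' _ _ hrα).symm

end Segment

section Scaling

variable {E : Type*} [NormedAddCommGroup E] [NormedSpace ℝ E]

theorem enorm_add_smul_sub_sub_rpow (x y : E) {t : ℝ} (ht : 0 < t) {γ : ℝ} (hγ : 0 ≤ γ) :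
    ‖x + t • (y - x) - x‖ₑ ^ γ = ENNReal.ofReal (t ^ γ) * ‖y - x‖ₑ ^ γ := by
  rw [add_sub_cancel_left, enorm_smul, Real.enorm_of_nonneg ht.le,
    ENNReal.mul_rpow_of_nonneg _ _ hγ, ENNReal.ofReal_rpow_of_pos ht]

variable [MeasurableSpace E] [BorelSpace E] [FiniteDimensional ℝ E] (μ : Measure E)
  [μ.IsAddHaarMeasure]

theorem lintegral_comp_add_smul_sub (F : E → ℝ≥0∞) (x : E) {t : ℝ} (ht : t ≠ 0) :
    ∫⁻ y, F (x + t • (y - x)) ∂μ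
      = ENNReal.ofReal |(t ^ Module.finrank ℝ E)⁻¹| * ∫⁻ z, F z ∂μ := by
  have hmap : ∫⁻ w, F (x + w) ∂(μ.map (t • ·)) = ∫⁻ w, F (x + t • w) ∂μ :=
    lintegral_map_equiv _ (Homeomorph.smulOfNeZero t ht).toMeasurableEquiv
  rw [lintegral_sub_right_eq_self (fun w => F (x + t • w)) x, ← hmap,
    Measure.map_addHaar_smul μ ht, lintegral_smul_measure, lintegral_add_left_eq_self, smul_eq_mul]

theorem Convex.setLIntegral_comp_add_smul_sub_le {V : Set E} (hV : Convex ℝ V) {x : E}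
    (hx : x ∈ V) {t : ℝ} (ht₀ : 0 < t) (ht₁ : t ≤ 1) (G : E → ℝ≥0∞) :
    ∫⁻ y in V, G (x + t • (y - x)) ∂μ
      ≤ ENNReal.ofReal (t ^ Module.finrank ℝ E)⁻¹ * ∫⁻ z in V, G z ∂μ := by
  have hmaps : ∀ y ∈ V, V.indicator G (x + t • (y - x)) = G (x + t • (y - x)) := fun y hy =>
    Set.indicator_of_mem (hV.add_smul_sub_mem hx hy ⟨ht₀.le, ht₁⟩) G
  calc ∫⁻ y in V, G (x + t • (y - x)) ∂μ
      = ∫⁻ y in V, V.indicator G (x + t • (y - x)) ∂μ :=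
        (lintegral_congr_ae ((ae_restrict_mem₀ (hV.nullMeasurableSet μ)).mono hmaps)).symm
    _ ≤ ∫⁻ y, V.indicator G (x + t • (y - x)) ∂μ := setLIntegral_le_lintegral _ _
    _ = ENNReal.ofReal (t ^ Module.finrank ℝ E)⁻¹ * ∫⁻ z, V.indicator G z ∂μ := by
        rw [lintegral_comp_add_smul_sub μ _ x ht₀.ne', abs_of_pos (by positivity)]
    _ ≤ ENNReal.ofReal (t ^ Module.finrank ℝ E)⁻¹ * ∫⁻ z in V, G z ∂μ :=
        mul_le_mul_right (lintegral_indicator_le G V) _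

theorem Convex.setLIntegral_comp_add_smul_sub_div_rpow_le {V : Set E} (hV : Convex ℝ V) {x : E}
    (hx : x ∈ V) {t : ℝ} (ht₀ : 0 < t) (ht₁ : t ≤ 1) {β : ℝ}
    (hβ : 0 ≤ β + Module.finrank ℝ E) (g : E → ℝ≥0∞) :
    ∫⁻ y in V, g (x + t • (y - x)) / ‖y - x‖ₑ ^ (β + Module.finrank ℝ E) ∂μ
      ≤ ENNReal.ofReal (t ^ β) *
          ∫⁻ z in V, g z / ‖z - x‖ₑ ^ (β + Module.finrank ℝ E) ∂μ := by
  set γ := β + Module.finrank ℝ E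
  set G : E → ℝ≥0∞ := fun z => g z / ‖z - x‖ₑ ^ γ
  have hc₀ : ENNReal.ofReal (t ^ γ) ≠ 0 := by simp [Real.rpow_pos_of_pos ht₀]
  have hpoint : ∀ y, g (x + t • (y - x)) / ‖y - x‖ₑ ^ γ
      = ENNReal.ofReal (t ^ γ) * G (x + t • (y - x)) := fun y => by
    rw [← mul_div_assoc, enorm_add_smul_sub_sub_rpow x y ht₀ hβ,
      ENNReal.mul_div_mul_left _ _ hc₀ ENNReal.ofReal_ne_top]
  have hcoef : ENNReal.ofReal (t ^ γ) * ENNReal.ofReal (t ^ Module.finrank ℝ E)⁻¹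
      = ENNReal.ofReal (t ^ β) := by
    rw [← ENNReal.ofReal_mul (by positivity), Real.rpow_add ht₀, Real.rpow_natCast]
    field_simp
  calc ∫⁻ y in V, g (x + t • (y - x)) / ‖y - x‖ₑ ^ γ ∂μ
      = ENNReal.ofReal (t ^ γ) * ∫⁻ y in V, G (x + t • (y - x)) ∂μ := by
        simp_rw [hpoint]; exact lintegral_const_mul' _ _ ENNReal.ofReal_ne_top
    _ ≤ ENNReal.ofReal (t ^ γ) *
          (ENNReal.ofReal (t ^ Module.finrank ℝ E)⁻¹ * ∫⁻ z in V, G z ∂μ) :=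
        mul_le_mul_right (hV.setLIntegral_comp_add_smul_sub_le μ hx ht₀ ht₁ G) _
    _ = ENNReal.ofReal (t ^ β) * ∫⁻ z in V, G z ∂μ := by rw [← mul_assoc, hcoef]

theorem Convex.setLIntegral_lintegral_Ioc_comp_add_smul_sub_div_rpow_le {V : Set E}
    (hV : Convex ℝ V) {x : E} (hx : x ∈ V) {β : ℝ} (hβ : 0 ≤ β + Module.finrank ℝ E)
    {g : E → ℝ≥0∞} (hg : Measurable g) :
    ∫⁻ y in V, (∫⁻ t in Set.Ioc (0 : ℝ) 1,
        g (x + t • (y - x)) / ‖y - x‖ₑ ^ (β + Module.finrank ℝ E)) ∂μ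
      ≤ (∫⁻ t in Set.Ioc (0 : ℝ) 1, ENNReal.ofReal (t ^ β)) *
          ∫⁻ z in V, g z / ‖z - x‖ₑ ^ (β + Module.finrank ℝ E) ∂μ := by
  rw [lintegral_lintegral_swap (by fun_prop)]
  calc _ ≤ ∫⁻ t in Set.Ioc (0 : ℝ) 1, ENNReal.ofReal (t ^ β) *
          ∫⁻ z in V, g z / ‖z - x‖ₑ ^ (β + Module.finrank ℝ E) ∂μ :=
        setLIntegral_mono' measurableSet_Ioc fun t ht =>
          hV.setLIntegral_comp_add_smul_sub_div_rpow_le μ hx ht.1 ht.2 hβ g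
    _ = _ := lintegral_mul_const _ (by fun_prop)

end Scaling

theorem remainder_operator_Lp_bound_general {n m : ℕ}
    (V : Set (EuclideanSpace ℝ (Fin n)))
    (hVconv : Convex ℝ V) (hVopen : IsOpen V)
    (s p : ℝ) (hs1 : 1 < s) (hp1 : 1 ≤ p)
    (u : EuclideanSpace ℝ (Fin n) → EuclideanSpace ℝ (Fin m))
    (hu : ContDiffOn ℝ 1 u V) :
    (∫⁻ x in V, ∫⁻ y in V,
        (‖u y - u x - fderiv ℝ u x (y - x)‖₊ : ℝ≥0∞) ^ p
          / (‖y - x‖₊ : ℝ≥0∞) ^ (s * p + n))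
      ≤ ENNReal.ofReal (∫ t in (0:ℝ)..1, t ^ ((s - 1) * p)) *
        ∫⁻ x in V, ∫⁻ y in V,
          (‖fderiv ℝ u y - fderiv ℝ u x‖₊ : ℝ≥0∞) ^ p
            / (‖y - x‖₊ : ℝ≥0∞) ^ ((s - 1) * p + n) := by
  simp only [← enorm_eq_nnnorm]
  have hVmeas : MeasurableSet V := hVopen.measurableSet
  have hβ : 0 < (s - 1) * p := by nlinarith
  have hdim : (n : ℝ) = Module.finrank ℝ (EuclideanSpace ℝ (Fin n)) := by simp
  calc _ ≤ ∫⁻ x in V, ∫⁻ y in V, ∫⁻ t in Set.Ioc (0 : ℝ) 1,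
          ‖fderiv ℝ u (x + t • (y - x)) - fderiv ℝ u x‖ₑ ^ p / ‖y - x‖ₑ ^ ((s - 1) * p + n) := by
        refine setLIntegral_mono' hVmeas fun x hx => setLIntegral_mono' hVmeas fun y hy => ?_
        rw [show s * p + n = p + ((s - 1) * p + n) by ring]
        exact hu.enorm_sub_sub_fderiv_rpow_div_le hVconv hVopen hx hy hp1 _
    _ ≤ ∫⁻ x in V, ENNReal.ofReal (∫ t in (0:ℝ)..1, t ^ ((s - 1) * p)) *
          ∫⁻ y in V, ‖fderiv ℝ u y - fderiv ℝ u x‖ₑ ^ p / ‖y - x‖ₑ ^ ((s - 1) * p + n) := by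
        refine setLIntegral_mono' hVmeas fun x hx => ?_
        rw [← lintegral_Ioc_ofReal_rpow (by linarith), hdim]
        exact hVconv.setLIntegral_lintegral_Ioc_comp_add_smul_sub_div_rpow_le volume hx
          (by positivity) (g := fun z => ‖fderiv ℝ u z - fderiv ℝ u x‖ₑ ^ p) (by fun_prop)
    _ = _ := lintegral_const_mul' _ _ ENNReal.ofReal_ne_top

/-- Jensen/FTC estimate for the remainder operator
`R^s u(x,y) = (u(y) - u(x) - Du(x)(y-x)) / |y-x|^s` on a bounded convex open set `V ⊆ ℝⁿ`:
`‖R^s u‖_{L^p(V×V,μ)}^p ≤ (∫₀¹ t^{(s-1)p} dt) · [Du]_{W^{s-1,p}(V)}^p`,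
where `dμ(x,y) = dx dy / |y-x|ⁿ`. -/
theorem remainder_operator_Lp_bound {n m : ℕ}
    (V : Set (EuclideanSpace ℝ (Fin n)))
    (hVbdd : Bornology.IsBounded V) (hVconv : Convex ℝ V) (hVopen : IsOpen V)
    (s p : ℝ) (hs1 : 1 < s) (hs2 : s < 2) (hp1 : 1 ≤ p)
    (u : EuclideanSpace ℝ (Fin n) → EuclideanSpace ℝ (Fin m))
    (hu : ContDiffOn ℝ 1 u V) :
    (∫⁻ x in V, ∫⁻ y in V,
        (‖u y - u x - fderiv ℝ u x (y - x)‖₊ : ℝ≥0∞) ^ p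
          / (‖y - x‖₊ : ℝ≥0∞) ^ (s * p + n))
      ≤ ENNReal.ofReal (∫ t in (0:ℝ)..1, t ^ ((s - 1) * p)) *
        ∫⁻ x in V, ∫⁻ y in V,
          (‖fderiv ℝ u y - fderiv ℝ u x‖₊ : ℝ≥0∞) ^ p
            / (‖y - x‖₊ : ℝ≥0∞) ^ ((s - 1) * p + n) :=
  remainder_operator_Lp_bound_general V hVconv hVopen s p hs1 hp1 u hu
end

section
/- Let M be a compact manifold, f, f₀: M → ℝᵐ two C¹ embeddings, and for 1 < s < 2 define the remainder operator R^s_f u(x,y) := (u(y) − u(x) − D_f u(x)(f(y) − f(x))) / |f(y) − f(x)|^s, where D_f u(x) := du(x) df(x)^†. Then with Λ_f(x,y) := |f₀(y) − f₀(x)| / |f(y) − f(x)|, the transformation identity R^s_f u(x,y) = Λ_f(x,y)^s · ( R^s_{f₀} u(x,y) − D_f u(x) · R^s_{f₀} f(x,y) ) holds for all x ≠ y. -/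
open scoped Manifold

/- The Moore–Penrose pseudoinverse `L† = (L* L)⁻¹ L*` of a linear map between
finite-dimensional real inner product spaces. -/
open Classical in
noncomputable def pinv {E F : Type*}
    [NormedAddCommGroup E] [InnerProductSpace ℝ E] [FiniteDimensional ℝ E]
    [NormedAddCommGroup F] [InnerProductSpace ℝ F] [FiniteDimensional ℝ F]
    (L : E →ₗ[ℝ] F) : F →ₗ[ℝ] E :=
  if h : Function.Bijective (LinearMap.adjoint L ∘ₗ L) then
    (LinearEquiv.ofBijective (LinearMap.adjoint L ∘ₗ L) h).symm.toLinearMap ∘ₗ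
      LinearMap.adjoint L
  else 0

/-- The differential `df(x) : T_xM → ℝᵐ` of `f : M → ℝᵐ`, viewed as a linear map on the
model space. -/
noncomputable def mder (n : ℕ) {m : ℕ} {M : Type*} [TopologicalSpace M]
    [ChartedSpace (EuclideanSpace ℝ (Fin n)) M]
    (f : M → EuclideanSpace ℝ (Fin m)) (x : M) :
    EuclideanSpace ℝ (Fin n) →L[ℝ] EuclideanSpace ℝ (Fin m) :=
  mfderiv (𝓘(ℝ, EuclideanSpace ℝ (Fin n))) (𝓘(ℝ, EuclideanSpace ℝ (Fin m))) f x

/-- The pulled-back differential `D_f u(x) := du(x) ∘ df(x)†`. -/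
noncomputable def Dop (n : ℕ) {m k : ℕ} {M : Type*} [TopologicalSpace M]
    [ChartedSpace (EuclideanSpace ℝ (Fin n)) M]
    (f : M → EuclideanSpace ℝ (Fin m)) (u : M → EuclideanSpace ℝ (Fin k)) (x : M) :
    EuclideanSpace ℝ (Fin m) →ₗ[ℝ] EuclideanSpace ℝ (Fin k) :=
  (mder n u x).toLinearMap ∘ₗ pinv (mder n f x).toLinearMap

/- Since `df(x)` is injective, `df(x)† ∘ df(x) = id`, which gives the chain rule
`D_f u(x) ∘ D_{f₀} f(x) = D_{f₀} u(x)`. With it, the identity is linear algebra plus the rescaling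
`|f(y) - f(x)|^{-s} = Λ_f(x,y)^s |f₀(y) - f₀(x)|^{-s}`. -/

theorem pinv_comp_self_of_injective {E F : Type*}
    [NormedAddCommGroup E] [InnerProductSpace ℝ E] [FiniteDimensional ℝ E]
    [NormedAddCommGroup F] [InnerProductSpace ℝ F] [FiniteDimensional ℝ F]
    {L : E →ₗ[ℝ] F} (hL : Function.Injective L) :
    pinv L ∘ₗ L = LinearMap.id := by
  have hinj : Function.Injective (LinearMap.adjoint L ∘ₗ L) := by
    rwa [LinearMap.coe_comp, LinearMap.adjoint_comp_self_injective_iff]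
  have hbij : Function.Bijective (LinearMap.adjoint L ∘ₗ L) :=
    ⟨hinj, LinearMap.injective_iff_surjective.mp hinj⟩
  ext v
  simp only [pinv, dif_pos hbij, LinearMap.comp_apply, LinearMap.id_apply]
  exact (LinearEquiv.ofBijective _ hbij).symm_apply_apply v

theorem Dop_comp_Dop {n m k : ℕ} {M : Type*} [TopologicalSpace M]
    [ChartedSpace (EuclideanSpace ℝ (Fin n)) M]
    {f : M → EuclideanSpace ℝ (Fin m)} (u : M → EuclideanSpace ℝ (Fin k))
    (f₀ : M → EuclideanSpace ℝ (Fin m)) {x : M} (hf : Function.Injective (mder n f x)) :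
    Dop n f u x ∘ₗ Dop n f₀ f x = Dop n f₀ u x := by
  rw [Dop, Dop, Dop, ← LinearMap.comp_assoc, LinearMap.comp_assoc _ (pinv _),
    pinv_comp_self_of_injective hf, LinearMap.comp_id]

theorem inv_rpow_smul_sub_eq_div_rpow_smul {V W X : Type*}
    [AddCommGroup V] [Module ℝ V] [AddCommGroup W] [Module ℝ W] [AddCommGroup X] [Module ℝ X]
    (A : V →ₗ[ℝ] W) (B : X →ₗ[ℝ] V) (w : W) (v : V) (v₀ : X) {a b s : ℝ}
    (ha : 0 ≤ a) (hb : 0 < b) :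
    (a ^ s)⁻¹ • (w - A v) =
      (b / a) ^ s • ((b ^ s)⁻¹ • (w - (A ∘ₗ B) v₀) - A ((b ^ s)⁻¹ • (v - B v₀))) := by
  have hscale : (b / a) ^ s * (b ^ s)⁻¹ = (a ^ s)⁻¹ := by
    rw [Real.div_rpow hb.le ha, div_mul_eq_mul_div,
      mul_inv_cancel₀ (Real.rpow_pos_of_pos hb s).ne', one_div]
  rw [map_smul, ← smul_sub, smul_smul, hscale, map_sub, LinearMap.comp_apply,
    sub_sub_sub_cancel_right]

theorem remainder_operator_transformation_general {n m k : ℕ} {M : Type*} [TopologicalSpace M]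
    [ChartedSpace (EuclideanSpace ℝ (Fin n)) M]
    (f f₀ : M → EuclideanSpace ℝ (Fin m)) (u : M → EuclideanSpace ℝ (Fin k))
    (hf₀inj : Function.Injective f₀)
    (hfimm : ∀ x : M, Function.Injective (mder n f x))
    (s : ℝ)
    (x y : M) (hxy : x ≠ y) :
    (‖f y - f x‖ ^ s)⁻¹ • (u y - u x - Dop n f u x (f y - f x)) =
      ((‖f₀ y - f₀ x‖ / ‖f y - f x‖) ^ s) •
        ((‖f₀ y - f₀ x‖ ^ s)⁻¹ • (u y - u x - Dop n f₀ u x (f₀ y - f₀ x)) -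
          Dop n f u x
            ((‖f₀ y - f₀ x‖ ^ s)⁻¹ • (f y - f x - Dop n f₀ f x (f₀ y - f₀ x)))) := by
  have hb : 0 < ‖f₀ y - f₀ x‖ := norm_pos_iff.mpr (sub_ne_zero.mpr (hf₀inj.ne hxy.symm))
  rw [← Dop_comp_Dop u f₀ (hfimm x)]
  exact inv_rpow_smul_sub_eq_div_rpow_smul _ _ _ _ _ (norm_nonneg _) hb

/-- Transformation identity for the remainder operator
`R^s_f u(x,y) = (u(y) - u(x) - D_f u(x)(f(y) - f(x))) / |f(y) - f(x)|^s`: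
with `Λ_f(x,y) = |f₀(y) - f₀(x)| / |f(y) - f(x)|`, one has
`R^s_f u(x,y) = Λ_f(x,y)^s · (R^s_{f₀} u(x,y) - D_f u(x) (R^s_{f₀} f(x,y)))` for `x ≠ y`. -/
theorem remainder_operator_transformation {n m k : ℕ} {M : Type*} [TopologicalSpace M]
    [ChartedSpace (EuclideanSpace ℝ (Fin n)) M]
    [IsManifold (𝓘(ℝ, EuclideanSpace ℝ (Fin n))) (⊤ : ℕ∞) M]
    [CompactSpace M]
    (f f₀ : M → EuclideanSpace ℝ (Fin m)) (u : M → EuclideanSpace ℝ (Fin k))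
    (hf : MDifferentiable (𝓘(ℝ, EuclideanSpace ℝ (Fin n)))
      (𝓘(ℝ, EuclideanSpace ℝ (Fin m))) f)
    (hf₀ : MDifferentiable (𝓘(ℝ, EuclideanSpace ℝ (Fin n)))
      (𝓘(ℝ, EuclideanSpace ℝ (Fin m))) f₀)
    (hfinj : Function.Injective f) (hf₀inj : Function.Injective f₀)
    (hfimm : ∀ x : M, Function.Injective (mder n f x))
    (hf₀imm : ∀ x : M, Function.Injective (mder n f₀ x))
    (hu : MDifferentiable (𝓘(ℝ, EuclideanSpace ℝ (Fin n)))
      (𝓘(ℝ, EuclideanSpace ℝ (Fin k))) u)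
    (s : ℝ) (hs1 : 1 < s) (hs2 : s < 2)
    (x y : M) (hxy : x ≠ y) :
    (‖f y - f x‖ ^ s)⁻¹ • (u y - u x - Dop n f u x (f y - f x)) =
      ((‖f₀ y - f₀ x‖ / ‖f y - f x‖) ^ s) •
        ((‖f₀ y - f₀ x‖ ^ s)⁻¹ • (u y - u x - Dop n f₀ u x (f₀ y - f₀ x)) -
          Dop n f u x
            ((‖f₀ y - f₀ x‖ ^ s)⁻¹ • (f y - f x - Dop n f₀ f x (f₀ y - f₀ x)))) :=
  remainder_operator_transformation_general f f₀ u hf₀inj hfimm s x y hxy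
end
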